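/- Let APX, OPT be triangle-free 2-matchings of G with |N_APX(u)| ≤ |N_OPT(u)| for all u, let P_1,...,P_{k-1} be edge-disjoint augmenting trails in APX △ OPT with deficient endpoints as in Invariant 1, and let P_k be an alternating trail satisfying Invariant 1 whose last edge is u_0u_1 and which is not augmenting (or is augmenting with non-deficient last node). Then there exists an edge u_1u_2 ∈ (APX △ OPT) \ (P_1 ∪ ... ∪ P_k) such that appending u_1u_2 to P_k keeps the trail alternating (i.e., u_1u_2 ∈ OPT\APX if u_0u_1 ∈ APX, and u_1u_2 ∈ APX\OPT if u_0u_1 ∈ OPT). -/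
import Mathlib


open Finset symmDiff

variable {V : Type*}

/-- Neighbors of `u` via edges in `S`. -/
def nbrs [Fintype V] [DecidableEq V] (S : Finset (Sym2 V)) (u : V) : Finset V :=
  Finset.univ.filter (fun v => s(u, v) ∈ S)

/-- `M` is a (simple) 2-matching of `G`: a set of edges of `G` giving each vertex degree ≤ 2. -/
def Is2Matching [Fintype V] [DecidableEq V] (G : SimpleGraph V) [DecidableRel G.Adj]
    (M : Finset (Sym2 V)) : Prop :=
  M ⊆ G.edgeFinset ∧ ∀ u : V, (nbrs M u).card ≤ 2

/-- The edge set `S` contains a triangle. -/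
def HasTriangle [DecidableEq V] (S : Finset (Sym2 V)) : Prop :=
  ∃ a b c : V, a ≠ b ∧ b ≠ c ∧ a ≠ c ∧ s(a, b) ∈ S ∧ s(b, c) ∈ S ∧ s(a, c) ∈ S

/-- A triangle-free 2-matching. -/
def IsTF2M [Fintype V] [DecidableEq V] (G : SimpleGraph V) [DecidableRel G.Adj]
    (M : Finset (Sym2 V)) : Prop :=
  Is2Matching G M ∧ ¬ HasTriangle M

/-- The list of edges of a trail given by its vertex sequence. -/
def trailEdges (vs : List V) : List (Sym2 V) :=
  List.zipWith (fun a b => s(a, b)) vs vs.tail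

/-- A trail: at least one edge, consecutive vertices distinct, all edges distinct. -/
def IsTrail [DecidableEq V] (vs : List V) : Prop :=
  2 ≤ vs.length ∧ vs.Chain' (· ≠ ·) ∧ (trailEdges vs).Nodup

/-- Edge set of a trail. -/
def edgesOf [DecidableEq V] (vs : List V) : Finset (Sym2 V) :=
  (trailEdges vs).toFinset

/-- An alternating trail w.r.t. `M`: edges alternate between `M` and its complement. -/
def IsAlternating [DecidableEq V] (M : Finset (Sym2 V)) (vs : List V) : Prop :=
  IsTrail vs ∧ (trailEdges vs).Chain' (fun e f => e ∈ M ↔ f ∉ M)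

/-- An augmenting trail for `M`: alternating, and `M ∆ P` is a triangle-free 2-matching
of size `|M| + 1`. -/
def IsAugmenting [Fintype V] [DecidableEq V] (G : SimpleGraph V) [DecidableRel G.Adj]
    (M : Finset (Sym2 V)) (vs : List V) : Prop :=
  IsAlternating M vs ∧ IsTF2M G (M ∆ edgesOf vs) ∧ (M ∆ edgesOf vs).card = M.card + 1

/-- The first edge of the trail `vs` belongs to `S`. -/
def FirstEdgeIn [DecidableEq V] (vs : List V) (S : Finset (Sym2 V)) : Prop :=
  ∃ e ∈ S, (trailEdges vs).head? = some e

/-- The last edge of the trail `vs` belongs to `S`. -/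
def LastEdgeIn [DecidableEq V] (vs : List V) (S : Finset (Sym2 V)) : Prop :=
  ∃ e ∈ S, (trailEdges vs).getLast? = some e

/-- `u` is deficient w.r.t. `E'`. -/
def Deficient [Fintype V] [DecidableEq V] (APX OPT E' : Finset (Sym2 V)) (u : V) : Prop :=
  (nbrs (APX \ E') u).card < (nbrs (OPT \ E') u).card

/-- `a b c` form a triangle in the edge set `S`. -/
def TriIn [DecidableEq V] (S : Finset (Sym2 V)) (a b c : V) : Prop :=
  a ≠ b ∧ b ≠ c ∧ a ≠ c ∧ s(a, b) ∈ S ∧ s(b, c) ∈ S ∧ s(a, c) ∈ S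


set_option linter.unusedSectionVars false
set_option maxHeartbeats 1600000

section AuxHelpers
variable [Fintype V] [DecidableEq V]

@[simp] lemma mem_nbrs {S : Finset (Sym2 V)} {u v : V} : v ∈ nbrs S u ↔ s(u, v) ∈ S := by
  simp [nbrs]

lemma nbrs_inter (S T : Finset (Sym2 V)) (u : V) : nbrs (S ∩ T) u = nbrs S u ∩ nbrs T u := by
  ext; simp [nbrs]

lemma nbrs_union (S T : Finset (Sym2 V)) (u : V) : nbrs (S ∪ T) u = nbrs S u ∪ nbrs T u := by
  ext; simp [nbrs]

lemma nbrs_sdiff (S T : Finset (Sym2 V)) (u : V) : nbrs (S \ T) u = nbrs S u \ nbrs T u := by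
  ext; simp [nbrs]

lemma nbrs_mono {S T : Finset (Sym2 V)} (h : S ⊆ T) (u : V) : nbrs S u ⊆ nbrs T u := by
  intro v hv; simp only [mem_nbrs] at *; exact h hv

lemma nbrs_biUnion {ι : Type*} [DecidableEq ι] (s : Finset ι) (f : ι → Finset (Sym2 V)) (u : V) :
    nbrs (s.biUnion f) u = s.biUnion fun i => nbrs (f i) u := by
  ext; simp [nbrs]

lemma nbrs_disjoint {S T : Finset (Sym2 V)} (h : Disjoint S T) (u : V) :
    Disjoint (nbrs S u) (nbrs T u) := by
  rw [Finset.disjoint_left] at h ⊢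
  intro v hv hv2
  exact h (mem_nbrs.mp hv) (mem_nbrs.mp hv2)

lemma card_nbrs_union {S T : Finset (Sym2 V)} (h : Disjoint S T) (u : V) :
    (nbrs (S ∪ T) u).card = (nbrs S u).card + (nbrs T u).card := by
  rw [nbrs_union, Finset.card_union_of_disjoint (nbrs_disjoint h u)]

lemma card_nbrs_sdiff_add (S T : Finset (Sym2 V)) (u : V) :
    (nbrs (S \ T) u).card + (nbrs (S ∩ T) u).card = (nbrs S u).card := by
  rw [nbrs_sdiff, nbrs_inter, Finset.card_sdiff_add_card_inter]

lemma card_nbrs_symmDiff (S T : Finset (Sym2 V)) (u : V) :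
    (nbrs (S ∆ T) u).card = (nbrs (S \ T) u).card + (nbrs (T \ S) u).card := by
  rw [symmDiff_def, Finset.sup_eq_union]
  exact card_nbrs_union disjoint_sdiff_sdiff u

lemma card_nbrs_le {S T : Finset (Sym2 V)} (h : S ⊆ T) (u : V) :
    (nbrs S u).card ≤ (nbrs T u).card :=
  Finset.card_le_card (nbrs_mono h u)

lemma card_nbrs_eq_filter (S : Finset (Sym2 V)) (u : V) :
    (nbrs S u).card = (S.filter (fun e => u ∈ e)).card := by
  apply Finset.card_bij (fun w _ => s(u, w))
  · intro w hw
    simp only [mem_nbrs] at hw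
    simp [hw]
  · intro w1 h1 w2 h2 h
    exact Sym2.congr_right.mp h
  · intro e he
    simp only [Finset.mem_filter] at he
    obtain ⟨w, rfl⟩ := Sym2.mem_iff_exists.mp he.2
    exact ⟨w, by simpa using he.1, rfl⟩

lemma length_filter_eq_card {L : List (Sym2 V)} (hL : L.Nodup) (p : Sym2 V → Prop)
    [DecidablePred p] :
    (L.filter (fun e => decide (p e))).length = (L.toFinset.filter p).card := by
  rw [← List.toFinset_card_of_nodup (hL.filter _), List.toFinset_filter]
  congr 1
  ext e
  simp

lemma countP_mem_eq {L : List (Sym2 V)} (hL : L.Nodup) (M : Finset (Sym2 V)) (u : V) :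
    L.countP (fun e => decide (u ∈ e ∧ e ∈ M)) = (nbrs (L.toFinset ∩ M) u).card := by
  rw [List.countP_eq_length_filter, length_filter_eq_card hL (fun e => u ∈ e ∧ e ∈ M),
    card_nbrs_eq_filter]
  congr 1
  ext e
  simp only [Finset.mem_filter, Finset.mem_inter]
  tauto

lemma countP_notMem_eq {L : List (Sym2 V)} (hL : L.Nodup) (M : Finset (Sym2 V)) (u : V) :
    L.countP (fun e => decide (u ∈ e ∧ e ∉ M)) = (nbrs (L.toFinset \ M) u).card := by
  rw [List.countP_eq_length_filter, length_filter_eq_card hL (fun e => u ∈ e ∧ e ∉ M),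
    card_nbrs_eq_filter]
  congr 1
  ext e
  simp only [Finset.mem_filter, Finset.mem_sdiff]
  tauto

lemma countP_in_eq {L : List (Sym2 V)} (hL : L.Nodup) (M : Finset (Sym2 V)) :
    L.countP (fun e => decide (e ∈ M)) = (L.toFinset ∩ M).card := by
  rw [List.countP_eq_length_filter, length_filter_eq_card hL (fun e => e ∈ M),
    Finset.filter_mem_eq_inter]

lemma countP_out_eq {L : List (Sym2 V)} (hL : L.Nodup) (M : Finset (Sym2 V)) :
    L.countP (fun e => decide (e ∉ M)) = (L.toFinset \ M).card := by
  rw [List.countP_eq_length_filter, length_filter_eq_card hL (fun e => e ∉ M),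
    ← Finset.sdiff_eq_filter]

end AuxHelpers

/-- Sign of an end of an alternating trail. -/
def esgn [DecidableEq V] (M : Finset (Sym2 V)) (v x : V) (e : Sym2 V) : ℤ :=
  if x = v then (if e ∈ M then 1 else -1) else 0

section VisitLemmas
variable [DecidableEq V]

lemma trailEdges_cons_cons (a b : V) (l : List V) :
    trailEdges (a :: b :: l) = s(a, b) :: trailEdges (b :: l) := rfl

lemma trailEdges_singleton (a : V) : trailEdges [a] = [] := rfl

lemma esgn_step (M : Finset (Sym2 V)) (v a b c : V) (hab : a ≠ b)
    (h12 : s(a, b) ∈ M ↔ s(b, c) ∉ M) :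
    ((if v ∈ s(a, b) ∧ s(a, b) ∈ M then (1:ℤ) else 0)
      - (if v ∈ s(a, b) ∧ s(a, b) ∉ M then (1:ℤ) else 0))
      + esgn M v b (s(b, c)) = esgn M v a (s(a, b)) := by
  by_cases hM : s(a, b) ∈ M <;> by_cases hva : v = a <;> by_cases hvb : v = b <;>
    simp_all [esgn, Sym2.mem_iff, eq_comm]

lemma visit_core (M : Finset (Sym2 V)) (v : V) :
    ∀ (l : List V) (a b : V), List.Chain' (· ≠ ·) (a :: b :: l) →
    List.Chain' (fun e f => e ∈ M ↔ f ∉ M) (trailEdges (a :: b :: l)) →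
    ∀ w e, (b :: l).getLast? = some w → (trailEdges (a :: b :: l)).getLast? = some e →
    ((trailEdges (a :: b :: l)).countP (fun x => decide (v ∈ x ∧ x ∈ M)) : ℤ)
      - (trailEdges (a :: b :: l)).countP (fun x => decide (v ∈ x ∧ x ∉ M))
    = esgn M v a (s(a, b)) + esgn M v w e := by
  intro l
  induction l with
  | nil =>
    intro a b hne halt w e hw he
    simp only [List.getLast?_singleton, Option.some.injEq] at hw
    have hab : a ≠ b := (List.isChain_cons_cons.mp hne).1
    rw [trailEdges_cons_cons, trailEdges_singleton] at he ⊢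
    simp only [List.getLast?_singleton, Option.some.injEq] at he
    subst hw he
    rw [List.countP_cons, List.countP_cons, List.countP_nil, List.countP_nil]
    simp only [decide_eq_true_eq]
    by_cases hM : s(a, b) ∈ M <;> by_cases hva : v = a <;> by_cases hvb : v = b <;>
      simp_all [esgn, Sym2.mem_iff, eq_comm]
  | cons c l' ih =>
    intro a b hne halt w e hw he
    have hne' : List.Chain' (· ≠ ·) (b :: c :: l') := hne.tail
    have hab : a ≠ b := (List.isChain_cons_cons.mp hne).1
    rw [trailEdges_cons_cons] at halt he ⊢
    rw [trailEdges_cons_cons (b := c)] at halt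
    have h12 : (s(a, b) ∈ M ↔ s(b, c) ∉ M) := (List.isChain_cons_cons.mp halt).1
    have halt' : List.Chain' (fun e f => e ∈ M ↔ f ∉ M) (trailEdges (b :: c :: l')) := by
      rw [trailEdges_cons_cons]
      exact (List.isChain_cons_cons.mp halt).2
    have hw' : (c :: l').getLast? = some w := by
      rwa [List.getLast?_cons_cons] at hw
    have he' : (trailEdges (b :: c :: l')).getLast? = some e := by
      rw [trailEdges_cons_cons]
      rwa [trailEdges_cons_cons, List.getLast?_cons_cons] at he
    have IH := ih b c hne' halt' w e hw' he'
    rw [List.countP_cons, List.countP_cons]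
    simp only [decide_eq_true_eq]
    push_cast
    linarith [IH, esgn_step M v a b c hab h12]

lemma alt_count (M : Finset (Sym2 V)) :
    ∀ (L : List (Sym2 V)) (e f : Sym2 V), L.Chain' (fun e f => e ∈ M ↔ f ∉ M) →
    L.head? = some e → L.getLast? = some f →
    (L.countP (fun x => decide (x ∉ M)) : ℤ) - L.countP (fun x => decide (x ∈ M))
      = (if e ∈ M then 0 else 1) + (if f ∈ M then 0 else 1) - 1 := by
  intro L
  induction L with
  | nil => intro e f _ he _; simp at he
  | cons x L' ih =>
    intro e f hc he hf
    simp only [List.head?_cons, Option.some.injEq] at he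
    subst he
    cases L' with
    | nil =>
      simp only [List.getLast?_singleton, Option.some.injEq] at hf
      subst hf
      rw [List.countP_cons, List.countP_cons, List.countP_nil, List.countP_nil]
      by_cases hM : x ∈ M <;> simp [hM]
    | cons y L'' =>
      have hc' : List.Chain' (fun e f => e ∈ M ↔ f ∉ M) (y :: L'') := hc.tail
      have h12 : x ∈ M ↔ y ∉ M := (List.isChain_cons_cons.mp hc).1
      have hf' : (y :: L'').getLast? = some f := by rwa [List.getLast?_cons_cons] at hf
      have IH := ih y f hc' (by simp) hf'
      rw [List.countP_cons, List.countP_cons]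
      simp only [decide_eq_true_eq]
      push_cast
      by_cases hM : x ∈ M
      · have hy : y ∉ M := h12.mp hM
        simp [hM, hy] at IH ⊢
        linarith
      · have hy : y ∈ M := by
          by_contra hy
          exact hM (h12.mpr hy)
        simp [hM, hy] at IH ⊢
        linarith

lemma trail_decomp {vs : List V} (h : 2 ≤ vs.length) : ∃ a b l, vs = a :: b :: l := by
  match vs, h with
  | a :: b :: l, _ => exact ⟨a, b, l, rfl⟩

lemma trail_ends {vs : List V} (h : 2 ≤ vs.length) :
    ∃ (a w : V) (e₀ e₁ : Sym2 V), vs.head? = some a ∧ vs.getLast? = some w ∧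
      (trailEdges vs).head? = some e₀ ∧ (trailEdges vs).getLast? = some e₁ := by
  obtain ⟨a, b, l, rfl⟩ := trail_decomp h
  refine ⟨a, (b :: l).getLast (by simp), (s(a, b)),
    (trailEdges (a :: b :: l)).getLast (by rw [trailEdges_cons_cons]; simp), rfl, ?_, ?_, ?_⟩
  · rw [List.getLast?_cons_cons]
    exact List.getLast?_eq_getLast_of_ne_nil _
  · rw [trailEdges_cons_cons]; rfl
  · exact List.getLast?_eq_getLast_of_ne_nil _

lemma mem_of_getLast?' {l : List V} {a : V} (h : l.getLast? = some a) : a ∈ l := by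
  obtain ⟨hne, rfl⟩ := List.mem_getLast?_eq_getLast (show a ∈ l.getLast? by simp [h, Option.mem_def])
  exact List.getLast_mem hne

end VisitLemmas

section TrailLevel
variable [Fintype V] [DecidableEq V]

lemma visit_trail (M : Finset (Sym2 V)) (v : V) (vs : List V)
    (halt : IsAlternating M vs) {a w : V} {e₀ e₁ : Sym2 V}
    (ha : vs.head? = some a) (hw : vs.getLast? = some w)
    (he₀ : (trailEdges vs).head? = some e₀) (he₁ : (trailEdges vs).getLast? = some e₁) :
    ((nbrs (edgesOf vs ∩ M) v).card : ℤ) - ((nbrs (edgesOf vs \ M) v).card : ℤ)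
      = esgn M v a e₀ + esgn M v w e₁ := by
  obtain ⟨x, b, l, rfl⟩ := trail_decomp halt.1.1
  simp only [List.head?_cons, Option.some.injEq] at ha
  subst ha
  rw [trailEdges_cons_cons, List.head?_cons, Option.some.injEq] at he₀
  rw [List.getLast?_cons_cons] at hw
  have hnd : (trailEdges (x :: b :: l)).Nodup := halt.1.2.2
  have key := visit_core M v l x b halt.1.2.1 halt.2 w e₁ hw he₁
  rw [countP_mem_eq hnd, countP_notMem_eq hnd] at key
  rw [← he₀]
  exact key

lemma trail_count (M : Finset (Sym2 V)) (vs : List V)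
    (halt : IsAlternating M vs) {e₀ e₁ : Sym2 V}
    (he₀ : (trailEdges vs).head? = some e₀) (he₁ : (trailEdges vs).getLast? = some e₁) :
    ((edgesOf vs \ M).card : ℤ) - ((edgesOf vs ∩ M).card : ℤ)
      = (if e₀ ∈ M then 0 else 1) + (if e₁ ∈ M then 0 else 1) - 1 := by
  have hnd : (trailEdges vs).Nodup := halt.1.2.2
  have key := alt_count M (trailEdges vs) e₀ e₁ halt.2 he₀ he₁
  rw [countP_in_eq hnd, countP_out_eq hnd] at key
  exact key

lemma card_symmDiff' (A T : Finset (Sym2 V)) :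
    (A ∆ T).card = (A \ T).card + (T \ A).card := by
  rw [symmDiff_def, Finset.sup_eq_union, Finset.card_union_of_disjoint disjoint_sdiff_sdiff]

end TrailLevel

theorem stmt_17 [Fintype V] [DecidableEq V] (G : SimpleGraph V) [DecidableRel G.Adj]
    (APX OPT : Finset (Sym2 V))
    (hAPX : IsTF2M G APX) (hOPT : IsTF2M G OPT)
    (hdom : ∀ u : V, (nbrs APX u).card ≤ (nbrs OPT u).card)
    (m : ℕ) (p : Fin m → List V) (pk : List V) (u₀ u₁ : V)
    (haug : ∀ i, IsAugmenting G APX (p i))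
    (hsub : ∀ i, edgesOf (p i) ⊆ APX ∆ OPT)
    (hdisj : ∀ i j, i ≠ j → Disjoint (edgesOf (p i)) (edgesOf (p j)))
    (hends : ∀ j : Fin m, ∀ u : V,
      ((p j).head? = some u ∨ (p j).getLast? = some u) →
      Deficient APX OPT
        ((Finset.univ.filter (fun i => i < j)).biUnion fun i => edgesOf (p i)) u)
    (hOPTtri : ∀ j : Fin m,
      ¬ HasTriangle (OPT ∆ ((Finset.univ.filter (fun i => i ≤ j)).biUnion
        fun i => edgesOf (p i))))
    (halt : IsAlternating APX pk)
    (hpksub : edgesOf pk ⊆ (APX ∆ OPT) \ (Finset.univ.biUnion fun i => edgesOf (p i)))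
    (hfirstedge : FirstEdgeIn pk (OPT \ APX))
    (hfirstnode : ∀ u : V, pk.head? = some u →
      Deficient APX OPT (Finset.univ.biUnion fun i => edgesOf (p i)) u)
    (hAPXtri : ¬ HasTriangle (APX ∆ edgesOf pk))
    (hOPTtrik : ¬ HasTriangle
      (OPT ∆ ((Finset.univ.biUnion fun i => edgesOf (p i)) ∪ edgesOf pk)))
    (hlastedge : (trailEdges pk).getLast? = some (s(u₀, u₁)))
    (hlastnode : pk.getLast? = some u₁)
    (hna : ¬ IsAugmenting G APX pk ∨
      ¬ Deficient APX OPT (Finset.univ.biUnion fun i => edgesOf (p i)) u₁) :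
    ∃ u₂ : V,
      s(u₁, u₂) ∈ (APX ∆ OPT) \
        ((Finset.univ.biUnion fun i => edgesOf (p i)) ∪ edgesOf pk) ∧
      (s(u₀, u₁) ∈ APX → s(u₁, u₂) ∈ OPT \ APX) ∧
      (s(u₀, u₁) ∈ OPT → s(u₁, u₂) ∈ APX \ OPT) := by
  classical
  -- basic subset facts
  have hEsub : (Finset.univ.biUnion fun i => edgesOf (p i)) ⊆ APX ∆ OPT := by
    intro e he
    rw [Finset.mem_biUnion] at he
    obtain ⟨i, _, hi⟩ := he
    exact hsub i hi
  have hQsub : edgesOf pk ⊆ APX ∆ OPT := fun e he => (Finset.mem_sdiff.mp (hpksub he)).1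
  have hQB : Disjoint (edgesOf pk) (Finset.univ.biUnion fun i => edgesOf (p i)) := by
    rw [Finset.disjoint_left]
    intro e he hB
    exact (Finset.mem_sdiff.mp (hpksub he)).2 hB
  have hWsub : (Finset.univ.biUnion fun i => edgesOf (p i)) ∪ edgesOf pk ⊆ APX ∆ OPT := Finset.union_subset hEsub hQsub
  -- generic identities for subsets of the symmetric difference
  have hOinter : ∀ S : Finset (Sym2 V), S ⊆ APX ∆ OPT → OPT ∩ S = S \ APX := by
    intro S hS; ext e
    simp only [Finset.mem_inter, Finset.mem_sdiff]
    constructor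
    · rintro ⟨h1, h2⟩
      refine ⟨h2, fun hA => ?_⟩
      rcases Finset.mem_symmDiff.mp (hS h2) with h | h
      · exact h.2 h1
      · exact h.2 hA
    · rintro ⟨h2, hA⟩
      rcases Finset.mem_symmDiff.mp (hS h2) with h | h
      · exact absurd h.1 hA
      · exact ⟨h.1, h2⟩
  have hsdOA : ∀ S : Finset (Sym2 V), S ⊆ APX ∆ OPT → S \ APX ⊆ OPT \ APX := by
    intro S hS e he
    rw [Finset.mem_sdiff] at he ⊢
    refine ⟨?_, he.2⟩
    rcases Finset.mem_symmDiff.mp (hS he.1) with h | h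
    · exact absurd h.1 he.2
    · exact h.1
  have hinAO : ∀ S : Finset (Sym2 V), S ⊆ APX ∆ OPT → S ∩ APX ⊆ APX \ OPT := by
    intro S hS e he
    rw [Finset.mem_inter] at he
    rw [Finset.mem_sdiff]
    refine ⟨he.2, fun hO => ?_⟩
    rcases Finset.mem_symmDiff.mp (hS he.1) with h | h
    · exact h.2 hO
    · exact h.2 he.2
  -- endpoints of pk
  obtain ⟨h₀, w', e₀', e₁', hh₀, hw', he₀', he₁'⟩ := trail_ends halt.1.1
  obtain ⟨efirst, hefOA, hef⟩ := hfirstedge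
  have hef_eq : e₀' = efirst := by rw [hef] at he₀'; exact (Option.some.inj he₀').symm
  subst hef_eq
  have efAPX : e₀' ∉ APX := (Finset.mem_sdiff.mp hefOA).2
  -- endpoints of the augmenting trails
  choose hd lst fe le hhd hlst hfe hle using fun i : Fin m => trail_ends ((haug i).1.1.1)
  -- first and last edges of each augmenting trail avoid APX
  have hfele : ∀ i : Fin m, fe i ∉ APX ∧ le i ∉ APX := by
    intro i
    have hcnt := trail_count APX (p i) (haug i).1 (hfe i) (hle i)
    have hcard := (haug i).2.2
    have h1 := card_symmDiff' APX (edgesOf (p i))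
    have h2 := Finset.card_sdiff_add_card_inter APX (edgesOf (p i))
    rw [Finset.inter_comm] at h2
    by_cases hf : fe i ∈ APX <;> by_cases hl : le i ∈ APX <;>
      simp only [hf, hl, if_true, if_false, not_true, not_false_iff, and_true, true_and,
        and_self] at hcnt ⊢ <;> omega
  -- per-trail visit identity at every vertex
  have hvisit : ∀ (v : V) (i : Fin m),
      (nbrs (edgesOf (p i) \ APX) v).card
        = (nbrs (edgesOf (p i) ∩ APX) v).card
          + ((if hd i = v then 1 else 0) + (if lst i = v then 1 else 0)) := by
    intro v i
    have h := visit_trail APX v (p i) (haug i).1 (hhd i) (hlst i) (hfe i) (hle i)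
    have h1 := (hfele i).1
    have h2 := (hfele i).2
    by_cases ha : hd i = v <;> by_cases hb : lst i = v <;>
      simp only [esgn, ha, hb, h1, if_true, if_false, if_neg h1, if_neg h2] at h <;>
      simp only [ha, hb, if_true, if_false] <;> omega
  -- sum decompositions
  have hsumA : ∀ (v : V) (s : Finset (Fin m)),
      (nbrs ((s.biUnion fun i => edgesOf (p i)) ∩ APX) v).card
        = ∑ i ∈ s, (nbrs (edgesOf (p i) ∩ APX) v).card := by
    intro v s
    have hb : (s.biUnion fun i => edgesOf (p i)) ∩ APX
        = s.biUnion fun i => edgesOf (p i) ∩ APX := by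
      ext e
      simp only [Finset.mem_inter, Finset.mem_biUnion]
      constructor
      · rintro ⟨⟨i, hi, hei⟩, hA⟩; exact ⟨i, hi, hei, hA⟩
      · rintro ⟨i, hi, hei, hA⟩; exact ⟨⟨i, hi, hei⟩, hA⟩
    rw [hb, nbrs_biUnion, Finset.card_biUnion]
    intro i _ j _ hij
    exact nbrs_disjoint ((hdisj i j hij).mono Finset.inter_subset_left
      Finset.inter_subset_left) v
  have hsumO : ∀ (v : V) (s : Finset (Fin m)),
      (nbrs ((s.biUnion fun i => edgesOf (p i)) \ APX) v).card
        = ∑ i ∈ s, (nbrs (edgesOf (p i) \ APX) v).card := by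
    intro v s
    have hb : (s.biUnion fun i => edgesOf (p i)) \ APX
        = s.biUnion fun i => edgesOf (p i) \ APX := by
      ext e
      simp only [Finset.mem_sdiff, Finset.mem_biUnion]
      constructor
      · rintro ⟨⟨i, hi, hei⟩, hA⟩; exact ⟨i, hi, hei, hA⟩
      · rintro ⟨i, hi, hei, hA⟩; exact ⟨⟨i, hi, hei⟩, hA⟩
    rw [hb, nbrs_biUnion, Finset.card_biUnion]
    intro i _ j _ hij
    exact nbrs_disjoint ((hdisj i j hij).mono Finset.sdiff_subset Finset.sdiff_subset) v
  have hsumT : ∀ (v : V) (s : Finset (Fin m)),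
      ∑ i ∈ s, (nbrs (edgesOf (p i) \ APX) v).card
        = ∑ i ∈ s, (nbrs (edgesOf (p i) ∩ APX) v).card
          + ∑ i ∈ s, ((if hd i = v then 1 else 0) + (if lst i = v then 1 else 0)) := by
    intro v s
    rw [← Finset.sum_add_distrib]
    exact Finset.sum_congr rfl fun i _ => hvisit v i
  -- unfolding deficiency
  have hdef_unfold : ∀ (v : V) (s : Finset (Fin m)),
      Deficient APX OPT (s.biUnion fun i => edgesOf (p i)) v ↔
        (nbrs APX v).card + ∑ i ∈ s, (nbrs (edgesOf (p i) \ APX) v).card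
          < (nbrs OPT v).card + ∑ i ∈ s, (nbrs (edgesOf (p i) ∩ APX) v).card := by
    intro v s
    have hsubB : (s.biUnion fun i => edgesOf (p i)) ⊆ APX ∆ OPT := by
      intro e he
      rw [Finset.mem_biUnion] at he
      obtain ⟨i, _, hi⟩ := he
      exact hsub i hi
    have e1 : (nbrs (APX \ (s.biUnion fun i => edgesOf (p i))) v).card
        + ∑ i ∈ s, (nbrs (edgesOf (p i) ∩ APX) v).card = (nbrs APX v).card := by
      have h := card_nbrs_sdiff_add APX (s.biUnion fun i => edgesOf (p i)) v
      rwa [Finset.inter_comm, hsumA v s] at h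
    have e2 : (nbrs (OPT \ (s.biUnion fun i => edgesOf (p i))) v).card
        + ∑ i ∈ s, (nbrs (edgesOf (p i) \ APX) v).card = (nbrs OPT v).card := by
      have h := card_nbrs_sdiff_add OPT (s.biUnion fun i => edgesOf (p i)) v
      rwa [hOinter _ hsubB, hsumO v s] at h
    unfold Deficient
    omega

  -- pk visit identity at every vertex
  have hvq : ∀ v : V, ((nbrs (edgesOf pk ∩ APX) v).card : ℤ) - (nbrs (edgesOf pk \ APX) v).card
      = esgn APX v h₀ e₀' + esgn APX v u₁ (s(u₀, u₁)) :=
    fun v => visit_trail APX v pk halt hh₀ hlastnode hef hlastedge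
  -- partitions of the used edges at every vertex
  have hWA : ∀ v : V, (nbrs (((Finset.univ.biUnion fun i => edgesOf (p i)) ∪ edgesOf pk) ∩ APX) v).card
      = (∑ i : Fin m, (nbrs (edgesOf (p i) ∩ APX) v).card)
        + (nbrs (edgesOf pk ∩ APX) v).card := by
    intro v
    have hb : ((Finset.univ.biUnion fun i => edgesOf (p i)) ∪ edgesOf pk) ∩ APX = ((Finset.univ.biUnion fun i => edgesOf (p i)) ∩ APX) ∪ (edgesOf pk ∩ APX) :=
      Finset.union_inter_distrib_right _ _ _
    rw [hb, card_nbrs_union (Disjoint.mono Finset.inter_subset_left Finset.inter_subset_left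
      hQB.symm) v, hsumA v Finset.univ]
  have hWO : ∀ v : V, (nbrs (((Finset.univ.biUnion fun i => edgesOf (p i)) ∪ edgesOf pk) \ APX) v).card
      = (∑ i : Fin m, (nbrs (edgesOf (p i) \ APX) v).card)
        + (nbrs (edgesOf pk \ APX) v).card := by
    intro v
    have hb : ((Finset.univ.biUnion fun i => edgesOf (p i)) ∪ edgesOf pk) \ APX = ((Finset.univ.biUnion fun i => edgesOf (p i)) \ APX) ∪ (edgesOf pk \ APX) :=
      Finset.union_sdiff_distrib _ _ _
    rw [hb, card_nbrs_union (Disjoint.mono Finset.sdiff_subset Finset.sdiff_subset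
      hQB.symm) v, hsumO v Finset.univ]
  -- partition of OPT \ APX resp. APX \ OPT by the used edges, at u₁
  have hOA_part : (nbrs ((OPT \ APX) \ ((Finset.univ.biUnion fun i => edgesOf (p i)) ∪ edgesOf pk)) u₁).card
      + (nbrs (((Finset.univ.biUnion fun i => edgesOf (p i)) ∪ edgesOf pk) \ APX) u₁).card = (nbrs (OPT \ APX) u₁).card := by
    have h := card_nbrs_sdiff_add (OPT \ APX) ((Finset.univ.biUnion fun i => edgesOf (p i)) ∪ edgesOf pk) u₁
    have hid : (OPT \ APX) ∩ ((Finset.univ.biUnion fun i => edgesOf (p i)) ∪ edgesOf pk) = ((Finset.univ.biUnion fun i => edgesOf (p i)) ∪ edgesOf pk) \ APX := by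
      ext e
      simp only [Finset.mem_inter, Finset.mem_sdiff]
      constructor
      · rintro ⟨⟨hO, hA⟩, hW⟩; exact ⟨hW, hA⟩
      · rintro ⟨hW, hA⟩
        refine ⟨⟨?_, hA⟩, hW⟩
        rcases Finset.mem_symmDiff.mp (hWsub hW) with h' | h'
        · exact absurd h'.1 hA
        · exact h'.1
    rwa [hid] at h
  have hAO_part : (nbrs ((APX \ OPT) \ ((Finset.univ.biUnion fun i => edgesOf (p i)) ∪ edgesOf pk)) u₁).card
      + (nbrs (((Finset.univ.biUnion fun i => edgesOf (p i)) ∪ edgesOf pk) ∩ APX) u₁).card = (nbrs (APX \ OPT) u₁).card := by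
    have h := card_nbrs_sdiff_add (APX \ OPT) ((Finset.univ.biUnion fun i => edgesOf (p i)) ∪ edgesOf pk) u₁
    have hid : (APX \ OPT) ∩ ((Finset.univ.biUnion fun i => edgesOf (p i)) ∪ edgesOf pk) = ((Finset.univ.biUnion fun i => edgesOf (p i)) ∪ edgesOf pk) ∩ APX := by
      ext e
      simp only [Finset.mem_inter, Finset.mem_sdiff]
      constructor
      · rintro ⟨⟨hA, hO⟩, hW⟩; exact ⟨hW, hA⟩
      · rintro ⟨hW, hA⟩
        refine ⟨⟨hA, ?_⟩, hW⟩
        rcases Finset.mem_symmDiff.mp (hWsub hW) with h' | h'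
        · exact h'.2
        · exact absurd hA h'.2
    rwa [hid] at h
  -- global degree partitions at u₁
  have hpartA : (nbrs (APX \ OPT) u₁).card + (nbrs (APX ∩ OPT) u₁).card
      = (nbrs APX u₁).card := card_nbrs_sdiff_add APX OPT u₁
  have hpartO : (nbrs (OPT \ APX) u₁).card + (nbrs (APX ∩ OPT) u₁).card
      = (nbrs OPT u₁).card := by
    have h := card_nbrs_sdiff_add OPT APX u₁
    rwa [Finset.inter_comm] at h
  have hdomu := hdom u₁
  -- the last edge is one of the used edges
  have heQ : s(u₀, u₁) ∈ edgesOf pk := List.mem_toFinset.mpr (mem_of_getLast?' hlastedge)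
  -- bound: subsets of used edges
  have hWO_le : (nbrs (((Finset.univ.biUnion fun i => edgesOf (p i)) ∪ edgesOf pk) \ APX) u₁).card ≤ (nbrs (OPT \ APX) u₁).card :=
    card_nbrs_le (hsdOA _ hWsub) u₁
  have hWA_le : (nbrs (((Finset.univ.biUnion fun i => edgesOf (p i)) ∪ edgesOf pk) ∩ APX) u₁).card ≤ (nbrs (APX \ OPT) u₁).card :=
    card_nbrs_le (hinAO _ hWsub) u₁
  have hTuniv := hsumT u₁ Finset.univ
  have hWAu := hWA u₁
  have hWOu := hWO u₁
  rcases Finset.mem_symmDiff.mp (hQsub heQ) with ⟨heA, heO⟩ | ⟨heO, heA⟩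
  · -- Case 1: the last edge of pk is in APX \ OPT; extend with an edge of OPT \ APX
    suffices h : 1 ≤ (nbrs ((OPT \ APX) \ ((Finset.univ.biUnion fun i => edgesOf (p i)) ∪ edgesOf pk)) u₁).card by
      obtain ⟨u₂, hu₂⟩ := Finset.card_pos.mp h
      rw [mem_nbrs, Finset.mem_sdiff] at hu₂
      refine ⟨u₂, Finset.mem_sdiff.mpr ⟨Finset.mem_symmDiff.mpr
        (Or.inr (Finset.mem_sdiff.mp hu₂.1)), hu₂.2⟩, fun _ => hu₂.1, fun hO => absurd hO heO⟩
    have hq := hvq u₁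
    have hdA1 : 1 ≤ (nbrs APX u₁).card :=
      Finset.card_pos.mpr ⟨u₀, mem_nbrs.mpr (by rwa [Sym2.eq_swap])⟩
    by_cases hH : h₀ = u₁
    · -- the start of pk is u₁, which is deficient
      simp [esgn, hH, efAPX, heA] at hq
      have hdefu := hfirstnode u₁ (by rwa [hH] at hh₀)
      rw [hdef_unfold u₁ Finset.univ] at hdefu
      omega
    · simp [esgn, hH, efAPX, heA] at hq
      by_cases htS : (∑ i : Fin m, ((if hd i = u₁ then 1 else 0)
          + (if lst i = u₁ then 1 else 0))) = 0
      · omega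
      · -- some earlier trail ended at u₁
        have t_le : ∀ i : Fin m, (nbrs APX u₁).card
            + ((if hd i = u₁ then 1 else 0) + (if lst i = u₁ then 1 else 0)) ≤ 2 := by
          intro i
          have h1 := card_nbrs_symmDiff APX (edgesOf (p i)) u₁
          have h2 : (nbrs (APX \ edgesOf (p i)) u₁).card
              + (nbrs (edgesOf (p i) ∩ APX) u₁).card = (nbrs APX u₁).card := by
            have h := card_nbrs_sdiff_add APX (edgesOf (p i)) u₁
            rwa [Finset.inter_comm] at h
          have h3 := hvisit u₁ i
          have h4 := (haug i).2.1.1.2 u₁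
          omega
        have hex : ∃ i : Fin m, ((if hd i = u₁ then 1 else 0)
            + (if lst i = u₁ then 1 else 0)) ≠ 0 := by
          by_contra hno
          push_neg at hno
          exact htS (Finset.sum_eq_zero fun i _ => hno i)
        have hne : (Finset.univ.filter (fun i : Fin m => ((if hd i = u₁ then 1 else 0)
            + (if lst i = u₁ then 1 else 0)) ≠ 0)).Nonempty := by
          obtain ⟨i, hi⟩ := hex
          exact ⟨i, Finset.mem_filter.mpr ⟨Finset.mem_univ i, hi⟩⟩
        set j := (Finset.univ.filter (fun i : Fin m => ((if hd i = u₁ then 1 else 0)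
            + (if lst i = u₁ then 1 else 0)) ≠ 0)).max' hne with hjdef
        have hjmem : ((if hd j = u₁ then 1 else 0) + (if lst j = u₁ then 1 else 0)) ≠ 0 := by
          have h := Finset.max'_mem _ hne
          rw [← hjdef] at h
          exact (Finset.mem_filter.mp h).2
        have htj : ((if hd j = u₁ then 1 else 0) + (if lst j = u₁ then 1 else 0)) = 1 := by
          have := t_le j
          omega
        have hdefj : Deficient APX OPT
            ((Finset.univ.filter (fun i => i < j)).biUnion fun i => edgesOf (p i)) u₁ := by
          by_cases hdj : hd j = u₁
          · exact hends j u₁ (Or.inl (by rw [hhd j, hdj]))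
          · have hlj : lst j = u₁ := by
              by_contra hlj
              simp [hdj, hlj] at htj
            exact hends j u₁ (Or.inr (by rw [hlst j, hlj]))
        rw [hdef_unfold u₁ (Finset.univ.filter (fun i => i < j))] at hdefj
        have hsplitA := Finset.sum_filter_add_sum_filter_not Finset.univ (fun i : Fin m => i < j)
          (fun i => (nbrs (edgesOf (p i) ∩ APX) u₁).card)
        have hsplitO := Finset.sum_filter_add_sum_filter_not Finset.univ (fun i : Fin m => i < j)
          (fun i => (nbrs (edgesOf (p i) \ APX) u₁).card)
        have hsplitT := Finset.sum_filter_add_sum_filter_not Finset.univ (fun i : Fin m => i < j)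
          (fun i => ((if hd i = u₁ then 1 else 0) + (if lst i = u₁ then 1 else 0)))
        have hTlt := hsumT u₁ (Finset.univ.filter (fun i : Fin m => i < j))
        have hTge := hsumT u₁ (Finset.univ.filter (fun i : Fin m => ¬ i < j))
        have htail : (∑ i ∈ Finset.univ.filter (fun i : Fin m => ¬ i < j),
            ((if hd i = u₁ then 1 else 0) + (if lst i = u₁ then 1 else 0))) = 1 := by
          rw [Finset.sum_eq_single_of_mem j (by simp)]
          · exact htj
          · intro i hi hij
            by_contra h0
            have hmem : i ∈ Finset.univ.filter (fun i : Fin m => ((if hd i = u₁ then 1 else 0)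
                + (if lst i = u₁ then 1 else 0)) ≠ 0) :=
              Finset.mem_filter.mpr ⟨Finset.mem_univ i, h0⟩
            have hle := Finset.le_max' _ i hmem
            rw [← hjdef] at hle
            simp only [Finset.mem_filter, Finset.mem_univ, true_and, not_lt] at hi
            exact hij (le_antisymm hle hi)
        omega
  · -- Case 2: the last edge of pk is in OPT \ APX; extend with an edge of APX \ OPT
    suffices h : 1 ≤ (nbrs ((APX \ OPT) \ ((Finset.univ.biUnion fun i => edgesOf (p i)) ∪ edgesOf pk)) u₁).card by
      obtain ⟨u₂, hu₂⟩ := Finset.card_pos.mp h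
      rw [mem_nbrs, Finset.mem_sdiff] at hu₂
      refine ⟨u₂, Finset.mem_sdiff.mpr ⟨Finset.mem_symmDiff.mpr
        (Or.inl (Finset.mem_sdiff.mp hu₂.1)), hu₂.2⟩, fun hA => absurd hA heA,
        fun _ => hu₂.1⟩
    have hq := hvq u₁
    by_cases hdef : Deficient APX OPT (Finset.univ.biUnion fun i => edgesOf (p i)) u₁
    · -- u₁ deficient: pk would be augmenting, contradiction
      have hnaug : ¬ IsAugmenting G APX pk := hna.resolve_right (not_not_intro hdef)
      by_contra hg
      apply hnaug
      -- first, numeric consequences of ¬(1 ≤ ...): the count is 0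
      -- pk's edge counts
      have hcnt := trail_count APX pk halt hef hlastedge
      simp only [if_neg efAPX, if_neg heA] at hcnt
      have hcard : (APX ∆ edgesOf pk).card = APX.card + 1 := by
        have h1 := card_symmDiff' APX (edgesOf pk)
        have h2 := Finset.card_sdiff_add_card_inter APX (edgesOf pk)
        rw [Finset.inter_comm] at h2
        omega
      have hsubG : APX ∆ edgesOf pk ⊆ G.edgeFinset := by
        intro e he
        rcases Finset.mem_symmDiff.mp he with h' | h'
        · exact hAPX.1.1 h'.1
        · rcases Finset.mem_symmDiff.mp (hQsub h'.1) with h'' | h''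
          · exact absurd h''.1 h'.2
          · exact hOPT.1.1 h''.1
      have hdeg : ∀ v : V, (nbrs (APX ∆ edgesOf pk) v).card ≤ 2 := by
        intro v
        have e1 := card_nbrs_symmDiff APX (edgesOf pk) v
        have e2 : (nbrs (APX \ edgesOf pk) v).card + (nbrs (edgesOf pk ∩ APX) v).card
            = (nbrs APX v).card := by
          have h := card_nbrs_sdiff_add APX (edgesOf pk) v
          rwa [Finset.inter_comm] at h
        have hqv := hvq v
        by_cases hHv : h₀ = v <;> by_cases hLv : u₁ = v
        · -- corner: v = h₀ = u₁
          subst hLv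
          simp [esgn, hHv, efAPX, heA] at hqv
          have hdefn := (hdef_unfold u₁ Finset.univ).mp hdef
          have hO2 := hOPT.1.2 u₁
          omega
        · -- v = h₀ only
          subst hHv
          simp [esgn, hLv, efAPX, heA] at hqv
          have hd0 := hfirstnode h₀ hh₀
          rw [hdef_unfold h₀ Finset.univ] at hd0
          have hT0 := hsumT h₀ Finset.univ
          have hO2 := hOPT.1.2 h₀
          omega
        · -- v = u₁ only
          subst hLv
          simp [esgn, hHv, efAPX, heA] at hqv
          have hdefn := (hdef_unfold u₁ Finset.univ).mp hdef
          have hO2 := hOPT.1.2 u₁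
          omega
        · simp [esgn, hHv, hLv] at hqv
          have hA2 := hAPX.1.2 v
          omega
      exact ⟨halt, ⟨⟨hsubG, hdeg⟩, hAPXtri⟩, hcard⟩
    · -- u₁ not deficient: direct counting
      have hdefn := hdef
      rw [hdef_unfold u₁ Finset.univ] at hdefn
      by_cases hH : h₀ = u₁
      · simp [esgn, hH, efAPX, heA] at hq
        omega
      · simp [esgn, hH, efAPX, heA] at hq
        omega
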